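/- arXiv:2408.10612 — 2 statements merged into one kernel-verified Lean document; each statement's English description precedes it below -/
import Mathlib

section
/- For any distribution functions F and G on ℝ, D₂(F, G) = sup_{x∈ℝ}(F(x) − G(x)) − inf_{x∈ℝ}(F(x) − G(x)). -/
open Filter Set

/-- A distribution function on ℝ: nondecreasing, right-continuous,
with limit 0 at -∞ and limit 1 at ∞. -/
def IsDistFun (F : ℝ → ℝ) : Prop :=
  Monotone F ∧ (∀ x, ContinuousWithinAt F (Set.Ici x) x) ∧
  Tendsto F atBot (nhds 0) ∧ Tendsto F atTop (nhds 1)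

/-- Extended evaluation: index 0 ↦ F(-∞)=0, index q+1 ↦ F(∞)=1,
indices 1..q ↦ F(vᵢ). -/
noncomputable def dext (q : ℕ) (F : ℝ → ℝ) (v : ℕ → ℝ) : ℕ → ℝ := fun i =>
  if i = 0 then 0 else if i = q + 1 then 1 else F (v i)

/-- r_{F,G}(v) = Σ_{i=0}^{q} min{F|_{vᵢ}^{vᵢ₊₁}, G|_{vᵢ}^{vᵢ₊₁}}. -/
noncomputable def rFG (q : ℕ) (F G : ℝ → ℝ) (v : ℕ → ℝ) : ℝ :=
  ∑ i ∈ Finset.range (q + 1),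
    min (dext q F v (i + 1) - dext q F v i) (dext q G v (i + 1) - dext q G v i)

/-- The statistic D_q(F, G) = 1 - inf over nondecreasing v ∈ ℝ^q of r_{F,G}(v). -/
noncomputable def Dq (q : ℕ) (F G : ℝ → ℝ) : ℝ :=
  1 - sInf {r | ∃ v : ℕ → ℝ, MonotoneOn v (Set.Icc 1 q) ∧ r = rFG q F G v}

lemma min_formula (a b : ℝ) : min a b = (a + b - |a - b|) / 2 := by
  rcases le_total a b with h | h
  · rw [min_eq_left h, abs_of_nonpos (by linarith)]; ring
  · rw [min_eq_right h, abs_of_nonneg (by linarith)]; ring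

lemma rFG_eq (F G : ℝ → ℝ) (v : ℕ → ℝ) :
    rFG 2 F G v = 1 - (|F (v 1) - G (v 1)| +
      |(F (v 2) - G (v 2)) - (F (v 1) - G (v 1))| + |F (v 2) - G (v 2)|) / 2 := by
  simp only [rFG, dext, Finset.sum_range_succ, Finset.sum_range_zero]
  norm_num
  rw [min_formula, min_formula, min_formula]
  have h1 : |F (v 2) - F (v 1) - (G (v 2) - G (v 1))| =
      |(F (v 2) - G (v 2)) - (F (v 1) - G (v 1))| := by ring_nf
  have h2 : |1 - F (v 2) - (1 - G (v 2))| = |F (v 2) - G (v 2)| := by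
    rw [abs_sub_comm]; ring_nf
  rw [h1, h2]; ring

lemma S_upper (a b M m : ℝ) (ha1 : m ≤ a) (ha2 : a ≤ M) (hb1 : m ≤ b) (hb2 : b ≤ M)
    (hm : m ≤ 0) (hM : 0 ≤ M) : |a| + |b - a| + |b| ≤ 2 * (M - m) := by
  rcases abs_cases a with ⟨h1, _⟩ | ⟨h1, _⟩ <;>
  rcases abs_cases b with ⟨h2, _⟩ | ⟨h2, _⟩ <;>
  rcases abs_cases (b - a) with ⟨h3, _⟩ | ⟨h3, _⟩ <;>
  rw [h1, h2, h3] <;> linarith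

lemma S_lower (a b : ℝ) : a - b ≤ (|a| + |b - a| + |b|) / 2 ∧
    b - a ≤ (|a| + |b - a| + |b|) / 2 := by
  have h1 := le_abs_self a
  have h2 := neg_abs_le a
  have h3 := le_abs_self b
  have h4 := neg_abs_le b
  have h5 := le_abs_self (b - a)
  have h6 := neg_abs_le (b - a)
  constructor <;> linarith

/-- D₂(F, G) = sup_x (F x − G x) − inf_x (F x − G x). -/
theorem D2_eq_sup_sub_inf (F G : ℝ → ℝ) (hF : IsDistFun F) (hG : IsDistFun G) :
    Dq 2 F G = (⨆ x : ℝ, F x - G x) - ⨅ x : ℝ, F x - G x := by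
  obtain ⟨hFmono, _, hFbot, hFtop⟩ := hF
  obtain ⟨hGmono, _, hGbot, hGtop⟩ := hG
  have hFb : ∀ x, 0 ≤ F x ∧ F x ≤ 1 := fun x =>
    ⟨le_of_tendsto hFbot (eventually_atBot.2 ⟨x, fun y hy => hFmono hy⟩),
     ge_of_tendsto hFtop (eventually_atTop.2 ⟨x, fun y hy => hFmono hy⟩)⟩
  have hGb : ∀ x, 0 ≤ G x ∧ G x ≤ 1 := fun x =>
    ⟨le_of_tendsto hGbot (eventually_atBot.2 ⟨x, fun y hy => hGmono hy⟩),
     ge_of_tendsto hGtop (eventually_atTop.2 ⟨x, fun y hy => hGmono hy⟩)⟩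
  have hba : BddAbove (range fun x => F x - G x) := by
    refine ⟨1, ?_⟩; rintro _ ⟨x, rfl⟩
    have := hFb x; have := hGb x; dsimp; linarith [(hFb x).2, (hGb x).1]
  have hbb : BddBelow (range fun x => F x - G x) := by
    refine ⟨-1, ?_⟩; rintro _ ⟨x, rfl⟩; dsimp; linarith [(hFb x).1, (hGb x).2]
  set M := ⨆ x : ℝ, F x - G x with hMdef
  set m := ⨅ x : ℝ, F x - G x with hmdef
  have hδa : ∀ x, F x - G x ≤ M := fun x => le_ciSup hba x
  have hδb : ∀ x, m ≤ F x - G x := fun x => ciInf_le hbb x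
  have htend : Tendsto (fun x => F x - G x) atTop (nhds 0) := by
    have := hFtop.sub hGtop; simpa using this
  have hM0 : 0 ≤ M := le_of_tendsto' htend hδa
  have hm0 : m ≤ 0 := ge_of_tendsto' htend hδb
  set A := {r | ∃ v : ℕ → ℝ, MonotoneOn v (Set.Icc 1 2) ∧ r = rFG 2 F G v} with hAdef
  have hAlb : ∀ r ∈ A, 1 - (M - m) ≤ r := by
    rintro r ⟨v, hv, rfl⟩
    rw [rFG_eq]
    have := S_upper (F (v 1) - G (v 1)) (F (v 2) - G (v 2)) M m
      (hδb _) (hδa _) (hδb _) (hδa _) hm0 hM0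
    linarith
  have hAne : A.Nonempty := ⟨rFG 2 F G (fun _ => 0), fun _ => 0, monotoneOn_const, rfl⟩
  have hAbdd : BddBelow A := ⟨1 - (M - m), hAlb⟩
  have key : ∀ x y : ℝ, (F x - G x) - (F y - G y) ≤ 1 - sInf A := by
    intro x y
    set v : ℕ → ℝ := fun i => if i ≤ 1 then min x y else max x y with hvdef
    have hvmono : MonotoneOn v (Set.Icc 1 2) := by
      intro i _ j _ hij
      simp only [hvdef]
      split_ifs with h1 h2 h2
      · exact le_refl _
      · exact min_le_max
      · omega
      · exact le_refl _
    have hmem : rFG 2 F G v ∈ A := ⟨v, hvmono, rfl⟩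
    have hle := csInf_le hAbdd hmem
    rw [rFG_eq] at hle
    have hv1 : v 1 = min x y := by simp [hvdef]
    have hv2 : v 2 = max x y := by simp [hvdef]
    rw [hv1, hv2] at hle
    rcases le_total x y with h | h
    · rw [min_eq_left h, max_eq_right h] at hle
      have := (S_lower (F x - G x) (F y - G y)).1
      linarith
    · rw [min_eq_right h, max_eq_left h] at hle
      have := (S_lower (F y - G y) (F x - G x)).2
      linarith
  have hInfle : sInf A ≤ 1 - (M - m) := by
    have h1 : ∀ y : ℝ, M ≤ 1 - sInf A + (F y - G y) := by
      intro y
      refine ciSup_le fun x => ?_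
      linarith [key x y]
    have h2 : M - (1 - sInf A) ≤ m := le_ciInf fun y => by linarith [h1 y]
    linarith
  have hInfge : 1 - (M - m) ≤ sInf A := le_csInf hAne hAlb
  have : sInf A = 1 - (M - m) := le_antisymm hInfle hInfge
  show 1 - sInf A = M - m
  rw [this]; ring
end

section
/- Let F be a continuous distribution function, U the standard uniform distribution function, and let W₁,…,W_n be i.i.d. uniform on [0,1] with empirical distribution function U_n. Set X'_i = F⁻(W_i) (the quantile transform) with empirical distribution function F'_n. Then almost surely D_q(F'_n, F) = D_q(U_n, U) for every q ∈ ℕ₊; without continuity of F one still has D_q(F'_n, F) ≤ D_q(U_n, U) almost surely. -/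
/-!
Almost surely every `Wᵢ` lies in `(0, 1)`, where the Galois connection `F⁻(w) ≤ x ↔ w ≤ F(x)`
gives `F'_n = U_n ∘ F`; also `F = U ∘ F`. So `r_{F'_n,F}(v) = r_{U_n,U}(F ∘ v)` and `F ∘ v` is
again nondecreasing, which gives the inequality. If `F` is continuous, every nondecreasing `w`
with values in `(0, 1)` is `F ∘ v` for `v = F⁻ ∘ w`. An arbitrary `w` is clamped into
`[δ, 1 - δ]` with `δ` below every `Wᵢ` and `1 - Wᵢ`: this leaves `U_n ∘ w` unchanged and moves
`U ∘ w` by at most `δ`, hence `r_{U_n,U}(w)` by at most `2 (q + 1) δ`.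
-/

open Filter Set

open MeasureTheory ProbabilityTheory

/-- The quantile function F⁻(y) = inf{x : F(x) ≥ y}. -/
noncomputable def quantileFn (F : ℝ → ℝ) (y : ℝ) : ℝ := sInf {x | y ≤ F x}

/-- The standard uniform distribution function U(x) = max{0, min{x, 1}}. -/
noncomputable def Ucdf : ℝ → ℝ := fun x => max 0 (min x 1)

/-- The empirical distribution function of Y₁(ω),…,Y_n(ω). -/
noncomputable def empOf {Ω : Type*} (n : ℕ) (Y : Fin n → Ω → ℝ) (ω : Ω) : ℝ → ℝ :=
  fun x => (∑ i : Fin n, if Y i ω ≤ x then (1 : ℝ) else 0) / n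


open scoped Topology

namespace IsDistFun

variable {F : ℝ → ℝ} {w x : ℝ}

lemma mem_Icc (hF : IsDistFun F) (x : ℝ) : F x ∈ Icc (0 : ℝ) 1 :=
  ⟨le_of_tendsto hF.2.2.1 (by filter_upwards [eventually_le_atBot x] with y hy using hF.1 hy),
    ge_of_tendsto hF.2.2.2 (by filter_upwards [eventually_ge_atTop x] with y hy using hF.1 hy)⟩

lemma Ucdf_comp (hF : IsDistFun F) : Ucdf ∘ F = F := by
  funext x
  simp only [Function.comp_apply, Ucdf, min_eq_left (hF.mem_Icc x).2, max_eq_right (hF.mem_Icc x).1]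

lemma bddBelow_setOf_le (hF : IsDistFun F) (hw : 0 < w) : BddBelow {x | w ≤ F x} := by
  obtain ⟨x₀, hx₀⟩ := eventually_atBot.1 (hF.2.2.1.eventually (eventually_lt_nhds hw))
  exact ⟨x₀, fun y hy => le_of_not_gt fun hlt => (hx₀ y hlt.le).not_ge hy⟩

lemma nonempty_setOf_le (hF : IsDistFun F) (hw : w < 1) : {x | w ≤ F x}.Nonempty :=
  ((hF.2.2.2.eventually (eventually_gt_nhds hw)).exists).imp fun _ => le_of_lt

/-- Right continuity makes the infimum defining `quantileFn F w` attained. -/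
lemma le_apply_quantileFn (hF : IsDistFun F) (hw : w ∈ Ioo (0 : ℝ) 1) :
    w ≤ F (quantileFn F w) := by
  have hlim := (hF.2.1 (quantileFn F w)).mono_left (nhdsWithin_mono _ Ioi_subset_Ici_self)
  refine ge_of_tendsto hlim ?_
  filter_upwards [self_mem_nhdsWithin] with x hx
  obtain ⟨y, hy, hyx⟩ := exists_lt_of_csInf_lt (hF.nonempty_setOf_le hw.2) hx
  exact hy.trans (hF.1 hyx.le)

lemma quantileFn_le_iff (hF : IsDistFun F) (hw : w ∈ Ioo (0 : ℝ) 1) :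
    quantileFn F w ≤ x ↔ w ≤ F x :=
  ⟨fun h => (hF.le_apply_quantileFn hw).trans (hF.1 h),
    fun h => csInf_le (hF.bddBelow_setOf_le hw.1) h⟩

lemma monotoneOn_quantileFn (hF : IsDistFun F) : MonotoneOn (quantileFn F) (Ioo 0 1) :=
  fun _ hs _ ht hst => (hF.quantileFn_le_iff hs).2 (hst.trans (hF.le_apply_quantileFn ht))

lemma apply_quantileFn (hF : IsDistFun F) (hFc : Continuous F) (hw : w ∈ Ioo (0 : ℝ) 1) :
    F (quantileFn F w) = w := by
  have hlim : Tendsto F (𝓝[<] quantileFn F w) (𝓝 (F (quantileFn F w))) :=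
    (hFc.tendsto _).mono_left nhdsWithin_le_nhds
  refine le_antisymm (le_of_tendsto hlim ?_) (hF.le_apply_quantileFn hw)
  filter_upwards [self_mem_nhdsWithin] with x hx
  exact le_of_lt (not_le.1 fun h => (not_le.2 hx) ((hF.quantileFn_le_iff hw).2 h))

end IsDistFun

section Dq

variable {q : ℕ} {A B f : ℝ → ℝ} {v v' : ℕ → ℝ}

def rFGValues (q : ℕ) (A B : ℝ → ℝ) : Set ℝ :=
  {r | ∃ v : ℕ → ℝ, MonotoneOn v (Icc 1 q) ∧ r = rFG q A B v}

lemma rFGValues_nonempty : (rFGValues q A B).Nonempty :=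
  ⟨_, fun _ => 0, monotoneOn_const, rfl⟩

lemma rFG_comp : rFG q (A ∘ f) (B ∘ f) v = rFG q A B (f ∘ v) := rfl

lemma dext_le_dext_succ (hA : Monotone A) (hA01 : ∀ x, A x ∈ Icc (0 : ℝ) 1)
    (hv : MonotoneOn v (Icc 1 q)) {i : ℕ} (hi : i ≤ q) :
    dext q A v i ≤ dext q A v (i + 1) := by
  unfold dext
  rcases Nat.eq_zero_or_pos i with rfl | hi0
  · rw [if_pos rfl, if_neg (Nat.succ_ne_zero 0)]
    split_ifs
    exacts [zero_le_one, (hA01 _).1]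
  · rw [if_neg hi0.ne', if_neg (by omega), if_neg (by omega)]
    split_ifs
    · exact (hA01 _).2
    · exact hA (hv ⟨hi0, hi⟩ ⟨by omega, by omega⟩ (by omega))

lemma rFG_nonneg (hA : Monotone A) (hA01 : ∀ x, A x ∈ Icc (0 : ℝ) 1)
    (hB : Monotone B) (hB01 : ∀ x, B x ∈ Icc (0 : ℝ) 1) (hv : MonotoneOn v (Icc 1 q)) :
    0 ≤ rFG q A B v :=
  Finset.sum_nonneg fun i hi => by
    have hiq : i ≤ q := Nat.lt_succ_iff.1 (Finset.mem_range.1 hi)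
    exact le_min (sub_nonneg.2 (dext_le_dext_succ hA hA01 hv hiq))
      (sub_nonneg.2 (dext_le_dext_succ hB hB01 hv hiq))

lemma bddBelow_rFGValues (hA : Monotone A) (hA01 : ∀ x, A x ∈ Icc (0 : ℝ) 1)
    (hB : Monotone B) (hB01 : ∀ x, B x ∈ Icc (0 : ℝ) 1) : BddBelow (rFGValues q A B) :=
  ⟨0, by rintro _ ⟨v, hv, rfl⟩; exact rFG_nonneg hA hA01 hB hB01 hv⟩

lemma abs_dext_sub_le {δ : ℝ} (hδ : 0 ≤ δ) (hA : ∀ i ∈ Icc 1 q, |A (v' i) - A (v i)| ≤ δ)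
    {j : ℕ} (hj : j ≤ q + 1) : |dext q A v' j - dext q A v j| ≤ δ := by
  unfold dext
  split_ifs with h0 hq
  · simpa using hδ
  · simpa using hδ
  · exact hA j ⟨Nat.one_le_iff_ne_zero.2 h0, by omega⟩

lemma rFG_le_add {δ : ℝ} (hδ : 0 ≤ δ) (hA : ∀ i ∈ Icc 1 q, |A (v' i) - A (v i)| ≤ δ)
    (hB : ∀ i ∈ Icc 1 q, |B (v' i) - B (v i)| ≤ δ) :
    rFG q A B v' ≤ rFG q A B v + (q + 1) * (2 * δ) := by
  have hinc : ∀ {C : ℝ → ℝ}, (∀ i ∈ Icc 1 q, |C (v' i) - C (v i)| ≤ δ) → ∀ i ∈ Finset.range (q + 1),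
      dext q C v' (i + 1) - dext q C v' i ≤ dext q C v (i + 1) - dext q C v i + 2 * δ := by
    intro C hC i hi
    have hiq := Finset.mem_range.1 hi
    have h₁ := abs_le.1 (abs_dext_sub_le hδ hC (j := i + 1) (by omega))
    have h₂ := abs_le.1 (abs_dext_sub_le hδ hC (j := i) (by omega))
    linarith [h₁.2, h₂.1]
  calc rFG q A B v'
      ≤ ∑ i ∈ Finset.range (q + 1), (min (dext q A v (i + 1) - dext q A v i)
          (dext q B v (i + 1) - dext q B v i) + 2 * δ) :=
        Finset.sum_le_sum fun i hi => (min_add_add_right _ _ (2 * δ)) ▸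
          min_le_min (hinc hA i hi) (hinc hB i hi)
    _ = rFG q A B v + (q + 1) * (2 * δ) := by
        rw [Finset.sum_add_distrib, Finset.sum_const, Finset.card_range, nsmul_eq_mul, rFG]
        push_cast
        ring

lemma Dq_comp_le (hf : Monotone f) (hAB : BddBelow (rFGValues q A B)) :
    Dq q (A ∘ f) (B ∘ f) ≤ Dq q A B := by
  have hsub : rFGValues q (A ∘ f) (B ∘ f) ⊆ rFGValues q A B := by
    rintro _ ⟨v, hv, rfl⟩
    exact ⟨f ∘ v, hf.comp_monotoneOn hv, rfl⟩
  exact sub_le_sub_left (csInf_le_csInf hAB rFGValues_nonempty hsub) 1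

end Dq

lemma Ucdf_mono : Monotone Ucdf := fun _ _ hab => max_le_max le_rfl (min_le_min hab le_rfl)

lemma Ucdf_mem_Icc (x : ℝ) : Ucdf x ∈ Icc (0 : ℝ) 1 :=
  ⟨le_max_left _ _, max_le zero_le_one (min_le_right _ _)⟩

lemma abs_Ucdf_clamp_sub_le {δ : ℝ} (hδ : 0 ≤ δ) (t : ℝ) :
    |Ucdf (max δ (min t (1 - δ))) - Ucdf t| ≤ δ := by
  simp only [Ucdf]
  rw [abs_le]
  constructor <;> simp only [max_def, min_def] <;> split_ifs <;> linarith

lemma le_clamp_iff {a b y t : ℝ} (hy : y ∈ Ioo a b) : y ≤ max a (min t b) ↔ y ≤ t := by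
  obtain ⟨hay, hyb⟩ := hy
  simp only [le_max_iff, le_min_iff]
  constructor
  · rintro (h | ⟨h, -⟩)
    exacts [absurd h (not_le.2 hay), h]
  · exact fun h => Or.inr ⟨h, hyb.le⟩

lemma eventually_forall_mem_Ioo_sub {ι : Type*} [Finite ι] {x : ι → ℝ}
    (hx : ∀ i, x i ∈ Ioo 0 1) : ∀ᶠ δ in 𝓝 0, ∀ i, x i ∈ Ioo δ (1 - δ) :=
  eventually_all.2 fun i => ((eventually_lt_nhds (hx i).1).and
    (eventually_lt_nhds (sub_pos.2 (hx i).2))).mono fun _ h => ⟨h.1, by linarith [h.2]⟩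

section empOf

variable {Ω : Type*} {n : ℕ} {W : Fin n → Ω → ℝ} {ω : Ω}

lemma monotone_empOf : Monotone (empOf n W ω) := fun a b hab => by
  refine div_le_div_of_nonneg_right (Finset.sum_le_sum fun i _ => ?_) n.cast_nonneg
  split_ifs with h₁ h₂
  exacts [le_rfl, absurd (h₁.trans hab) h₂, zero_le_one, le_rfl]

lemma empOf_mem_Icc (x : ℝ) : empOf n W ω x ∈ Icc (0 : ℝ) 1 := by
  have hterm : ∀ i, (if W i ω ≤ x then (1 : ℝ) else 0) ∈ Icc (0 : ℝ) 1 := fun i => by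
    split_ifs <;> simp
  refine ⟨div_nonneg (Finset.sum_nonneg fun i _ => (hterm i).1) n.cast_nonneg,
    div_le_one_of_le₀ ?_ n.cast_nonneg⟩
  calc _ ≤ ∑ _i : Fin n, (1 : ℝ) := Finset.sum_le_sum fun i _ => (hterm i).2
    _ = n := by simp

lemma empOf_congr {s t : ℝ} (h : ∀ i, W i ω ≤ s ↔ W i ω ≤ t) :
    empOf n W ω s = empOf n W ω t := by
  simp only [empOf, h]

lemma empOf_quantileFn {F : ℝ → ℝ} (hF : IsDistFun F) (hω : ∀ i, W i ω ∈ Ioo 0 1) :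
    empOf n (fun i ω' => quantileFn F (W i ω')) ω = empOf n W ω ∘ F :=
  funext fun x => by simp only [empOf, Function.comp_apply, hF.quantileFn_le_iff (hω _)]

lemma rFG_empOf_clamp_le {q : ℕ} {δ : ℝ} (hδ : 0 ≤ δ) (hWδ : ∀ i, W i ω ∈ Ioo δ (1 - δ))
    (w : ℕ → ℝ) :
    rFG q (empOf n W ω) Ucdf (fun i => max δ (min (w i) (1 - δ)))
      ≤ rFG q (empOf n W ω) Ucdf w + (q + 1) * (2 * δ) := by
  refine rFG_le_add hδ (fun i _ => ?_) (fun i _ => abs_Ucdf_clamp_sub_le hδ _)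
  rw [empOf_congr fun j => le_clamp_iff (hWδ j), sub_self, abs_zero]
  exact hδ

lemma Dq_empOf_le_Dq_comp {F : ℝ → ℝ} (hF : IsDistFun F) (hFc : Continuous F)
    (hω : ∀ i, W i ω ∈ Ioo 0 1) (q : ℕ) :
    Dq q (empOf n W ω) Ucdf ≤ Dq q (empOf n W ω ∘ F) (Ucdf ∘ F) := by
  have hbdd : BddBelow (rFGValues q (empOf n W ω ∘ F) (Ucdf ∘ F)) :=
    bddBelow_rFGValues (monotone_empOf.comp hF.1) (fun _ => empOf_mem_Icc _)
      (Ucdf_mono.comp hF.1) (fun _ => Ucdf_mem_Icc _)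
  refine sub_le_sub_left (le_csInf rFGValues_nonempty ?_) 1
  rintro _ ⟨w, hw, rfl⟩
  refine le_of_forall_pos_le_add fun ε hε => ?_
  have hlim : Tendsto (fun δ : ℝ => (q + 1) * (2 * δ)) (𝓝 0) (𝓝 0) :=
    Continuous.tendsto' (by fun_prop) 0 0 (by simp)
  obtain ⟨δ, ⟨hδε, hWδ⟩, hδ₀, hδ₁⟩ :=
    (((hlim.eventually (eventually_lt_nhds hε)).and (eventually_forall_mem_Ioo_sub hω)).filter_mono
      nhdsWithin_le_nhds |>.and (Ioo_mem_nhdsGT one_half_pos)).exists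
  set w' : ℕ → ℝ := fun i => max δ (min (w i) (1 - δ))
  have hw' : ∀ i, w' i ∈ Ioo (0 : ℝ) 1 := fun i =>
    ⟨hδ₀.trans_le (le_max_left _ _),
      max_lt (by linarith) ((min_le_right _ _).trans_lt (by linarith))⟩
  have hv : MonotoneOn (quantileFn F ∘ w') (Icc 1 q) :=
    hF.monotoneOn_quantileFn.comp
      (fun i hi j hj hij => max_le_max le_rfl (min_le_min (hw hi hj hij) le_rfl)) fun i _ => hw' i
  calc sInf (rFGValues q (empOf n W ω ∘ F) (Ucdf ∘ F))
      ≤ rFG q (empOf n W ω ∘ F) (Ucdf ∘ F) (quantileFn F ∘ w') := csInf_le hbdd ⟨_, hv, rfl⟩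
    _ = rFG q (empOf n W ω) Ucdf w' := by
        rw [rFG_comp, show F ∘ (quantileFn F ∘ w') = w' from
          funext fun i => hF.apply_quantileFn hFc (hw' i)]
    _ ≤ rFG q (empOf n W ω) Ucdf w + (q + 1) * (2 * δ) := rFG_empOf_clamp_le hδ₀.le hWδ w
    _ ≤ rFG q (empOf n W ω) Ucdf w + ε := by linarith

end empOf

lemma ae_mem_Ioo_of_map_eq {Ω : Type*} [MeasurableSpace Ω] {P : Measure Ω} {X : Ω → ℝ}
    (hX : AEMeasurable X P) (hmap : P.map X = volume.restrict (Icc 0 1)) :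
    ∀ᵐ ω ∂P, X ω ∈ Ioo 0 1 := by
  refine ae_of_ae_map hX ?_
  rw [hmap, ← Measure.restrict_congr_set Ioo_ae_eq_Icc]
  exact ae_restrict_mem measurableSet_Ioo

theorem quantile_transform_Dq_general
    {Ω : Type*} [MeasurableSpace Ω] (P : Measure Ω)
    (n : ℕ) (W : Fin n → Ω → ℝ) (hmeas : ∀ i, Measurable (W i))
    (hunif : ∀ i, Measure.map (W i) P = volume.restrict (Set.Icc 0 1))
    (F : ℝ → ℝ) (hF : IsDistFun F) :
    (∀ᵐ ω ∂P, ∀ q : ℕ, 1 ≤ q →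
        Dq q (empOf n (fun i ω' => quantileFn F (W i ω')) ω) F
          ≤ Dq q (empOf n W ω) Ucdf) ∧
    (Continuous F → ∀ᵐ ω ∂P, ∀ q : ℕ, 1 ≤ q →
        Dq q (empOf n (fun i ω' => quantileFn F (W i ω')) ω) F
          = Dq q (empOf n W ω) Ucdf) := by
  have hae : ∀ᵐ ω ∂P, ∀ i, W i ω ∈ Ioo 0 1 :=
    ae_all_iff.2 fun i => ae_mem_Ioo_of_map_eq (hmeas i).aemeasurable (hunif i)
  have hcomp : ∀ ω, (∀ i, W i ω ∈ Ioo 0 1) → ∀ q,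
      Dq q (empOf n (fun i ω' => quantileFn F (W i ω')) ω) F
        = Dq q (empOf n W ω ∘ F) (Ucdf ∘ F) := fun ω hω q => by
    rw [empOf_quantileFn hF hω, hF.Ucdf_comp]
  have hle : ∀ ω q, Dq q (empOf n W ω ∘ F) (Ucdf ∘ F) ≤ Dq q (empOf n W ω) Ucdf := fun ω q =>
    Dq_comp_le hF.1 (bddBelow_rFGValues monotone_empOf (fun _ => empOf_mem_Icc _) Ucdf_mono
      Ucdf_mem_Icc)
  refine ⟨?_, fun hFc => ?_⟩ <;> filter_upwards [hae] with ω hω q _ <;> rw [hcomp ω hω q]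
  · exact hle ω q
  · exact le_antisymm (hle ω q) (Dq_empOf_le_Dq_comp hF hFc hω q)

/-- With W₁,…,W_n i.i.d. standard uniform and X'ᵢ = F⁻(Wᵢ), almost surely
D_q(F'_n, F) ≤ D_q(U_n, U) for every q ≥ 1; if F is continuous, almost surely
D_q(F'_n, F) = D_q(U_n, U) for every q ≥ 1. -/
theorem quantile_transform_Dq
    {Ω : Type*} [MeasurableSpace Ω] (P : Measure Ω) [IsProbabilityMeasure P]
    (n : ℕ) (hn : 0 < n) (W : Fin n → Ω → ℝ) (hmeas : ∀ i, Measurable (W i))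
    (hindep : iIndepFun W P)
    (hunif : ∀ i, Measure.map (W i) P = volume.restrict (Set.Icc 0 1))
    (F : ℝ → ℝ) (hF : IsDistFun F) :
    (∀ᵐ ω ∂P, ∀ q : ℕ, 1 ≤ q →
        Dq q (empOf n (fun i ω' => quantileFn F (W i ω')) ω) F
          ≤ Dq q (empOf n W ω) Ucdf) ∧
    (Continuous F → ∀ᵐ ω ∂P, ∀ q : ℕ, 1 ≤ q →
        Dq q (empOf n (fun i ω' => quantileFn F (W i ω')) ω) F
          = Dq q (empOf n W ω) Ucdf) :=
  quantile_transform_Dq_general P n W hmeas hunif F hF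
end
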